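/- Let (R, +, ·) be a λₑ-strong hyperring and M a nonempty subset of R. Then M·Dₑ(R) = Dₑ(R)·M = φₑ⁻¹(φₑ(M)), where Dₑ(R) = φₑ⁻¹(1) is the preimage of the identity of R/λₑ* under the canonical projection φₑ. -/

import Mathlib

/-- A hyperoperation on `H`: every pair maps to a nonempty subset. -/
structure Hyperop (H : Type*) where
  op : H → H → Set H
  op_nonempty : ∀ x y, (op x y).Nonempty

namespace Hyperop

variable {H : Type*}

/-- Extension of the hyperoperation to subsets. -/
def sop (h : Hyperop H) (A B : Set H) : Set H := ⋃ a ∈ A, ⋃ b ∈ B, h.op a b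

/-- Associativity of a hyperoperation (on sets). -/
def IsAssoc (h : Hyperop H) : Prop :=
  ∀ x y z : H, h.sop (h.op x y) {z} = h.sop {x} (h.op y z)

/-- Reproduction axiom: `x ∘ H = H ∘ x = H`. -/
def IsReproductive (h : Hyperop H) : Prop :=
  ∀ x y : H, (∃ u, y ∈ h.op x u) ∧ (∃ v, y ∈ h.op v x)

/-- A relation `T` is strongly regular (on both sides) w.r.t. `h`. -/
def StronglyRegular (h : Hyperop H) (T : H → H → Prop) : Prop :=
  ∀ x y, T x y → ∀ a : H,
    (∀ u ∈ h.op a x, ∀ v ∈ h.op a y, T u v) ∧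
    (∀ u ∈ h.op x a, ∀ v ∈ h.op y a, T u v)

/-- `h.foldl x l` : the set `x ∘ l₁ ∘ ⋯ ∘ lₖ`. -/
def foldl (h : Hyperop H) : H → List H → Set H
  | x, [] => {x}
  | x, y :: l => ⋃ z ∈ h.op x y, h.foldl z l

/-- Hyper-"product" of a nonempty list of elements (empty list gives `∅`). -/
def listProd (h : Hyperop H) : List H → Set H
  | [] => ∅
  | x :: l => h.foldl x l

/-- Fold a list of subsets onto a subset. -/
def setFold (h : Hyperop H) : Set H → List (Set H) → Set H
  | A, [] => A
  | A, B :: l => h.setFold (h.sop A B) l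

end Hyperop

/-- `l'` is obtained from `l` by inserting one consecutive block of copies of `e`
(or is equal to `l`). -/
def InsertBlock {α : Type*} (e : α) (l l' : List α) : Prop :=
  l' = l ∨ ∃ (p q : List α) (k : ℕ), 1 ≤ k ∧ l = p ++ q ∧ l' = p ++ List.replicate k e ++ q

/-- A hyperring: `(R, +)` a hypergroup, `(R, ·)` a semi-hypergroup,
with two-sided distributivity. -/
structure Hyperring (R : Type*) where
  add : Hyperop R
  mul : Hyperop R
  add_assoc : add.IsAssoc
  add_repro : add.IsReproductive
  mul_assoc : mul.IsAssoc
  left_distrib : ∀ x y z : R, mul.sop {x} (add.op y z) = add.sop (mul.op x y) (mul.op x z)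
  right_distrib : ∀ x y z : R, mul.sop (add.op y z) {x} = add.sop (mul.op y x) (mul.op z x)

namespace Hyperring

variable {R : Type*}

/-- Sum of products: `ll` is a list of lists; each inner list is multiplied,
the results are added up. -/
def SOP (S : Hyperring R) : List (List R) → Set R
  | [] => ∅
  | l :: t => S.add.setFold (S.mul.listProd l) (t.map S.mul.listProd)

/-- A valid sum-of-products expression: nonempty list of nonempty lists. -/
def ValidExpr (S : Hyperring R) (ll : List (List R)) : Prop :=
  ll ≠ [] ∧ ∀ l ∈ ll, l ≠ []

/-- The Vougiouklis relation `Γ`. -/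
def gamma (S : Hyperring R) (x y : R) : Prop :=
  ∃ ll, S.ValidExpr ll ∧ x ∈ S.SOP ll ∧ y ∈ S.SOP ll

/-- The relation `α₊` : permuting the summands. -/
def alphaPlus (S : Hyperring R) (x y : R) : Prop :=
  ∃ ll ll', S.ValidExpr ll ∧ ll.Perm ll' ∧ x ∈ S.SOP ll ∧ y ∈ S.SOP ll'

/-- The relation `α×` : permuting the factors inside each product. -/
def alphaTimes (S : Hyperring R) (x y : R) : Prop :=
  ∃ ll ll', S.ValidExpr ll ∧ List.Forall₂ List.Perm ll ll' ∧ x ∈ S.SOP ll ∧ y ∈ S.SOP ll'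

/-- The Davvaz–Vougiouklis relation `α` : permuting factors inside each
product and then permuting the summands. -/
def alpha (S : Hyperring R) (x y : R) : Prop :=
  ∃ ll mid ll', S.ValidExpr ll ∧ List.Forall₂ List.Perm ll mid ∧ mid.Perm ll' ∧
    x ∈ S.SOP ll ∧ y ∈ S.SOP ll'

/-- Condition `𝔓ₑ` : each product of the second expression is obtained from the
corresponding product of the first by inserting a block of copies of `e`. -/
def CondP (S : Hyperring R) (e : R) (ll ll' : List (List R)) : Prop :=
  List.Forall₂ (InsertBlock e) ll ll'

/-- The relation `(λ^e_×)ₘ`. -/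
def lamTimesN (S : Hyperring R) (e : R) (m : ℕ) (x y : R) : Prop :=
  ∃ ll ll', ll.length = m ∧ S.ValidExpr ll ∧ S.CondP e ll ll' ∧
    ((x ∈ S.SOP ll ∧ y ∈ S.SOP ll') ∨ (x ∈ S.SOP ll' ∧ y ∈ S.SOP ll))

/-- The relation `λ^e_×`. -/
def lamTimes (S : Hyperring R) (e : R) (x y : R) : Prop :=
  ∃ m, 1 ≤ m ∧ S.lamTimesN e m x y

/-- The relation `λₑ = λ^e_× ∪ α₊`. -/
def lam (S : Hyperring R) (e : R) (x y : R) : Prop :=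
  S.lamTimes e x y ∨ S.alphaPlus x y

/-- The relation `Λₑ = λ^e_× ∪ α`. -/
def Lam (S : Hyperring R) (e : R) (x y : R) : Prop :=
  S.lamTimes e x y ∨ S.alpha x y

/-- `M` is a `λₑ`-part. -/
def IsLamPart (S : Hyperring R) (e : R) (M : Set R) : Prop :=
  (∀ ll ll', S.ValidExpr ll → ll.Perm ll' → (S.SOP ll ∩ M).Nonempty → S.SOP ll' ⊆ M) ∧
  (∀ ll ll', S.ValidExpr ll → (S.CondP e ll ll' ∨ S.CondP e ll' ll) →
      (S.SOP ll ∩ M).Nonempty → S.SOP ll' ⊆ M)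

/-- A `λₑ`-strong hyperring. -/
def LamStrong (S : Hyperring R) (e : R) : Prop :=
  (∀ x y, Relation.TransGen (S.lam e) x y →
      (S.mul.op x e ∩ S.mul.op y e).Nonempty ∧ (S.mul.op e x ∩ S.mul.op e y).Nonempty) ∧
  (∀ x z, z ∈ S.mul.op x e → x ∈ S.mul.op z e) ∧
  (∀ x z, z ∈ S.mul.op e x → x ∈ S.mul.op e z)

end Hyperring

/-!
Every `z ∈ x ∘ e` is one `λ^e_×` step away from `x` (insert `e` into the product `[x]`), so right
multiplication by `e` stays inside `λₑ*`-classes. Conversely, by `λₑ`-strength, `λₑ*`-equivalent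
elements have a common right multiple by `e`, and `· e` can be undone. With associativity this
lets one trade a factor `d ∈ Dₑ(R)` for `e ∘ e` and back. The left identity is the same argument
for the opposite multiplication.
-/

namespace Hyperop

variable {H : Type*} (h : Hyperop H)

def swap : Hyperop H := ⟨fun x y => h.op y x, fun x y => h.op_nonempty y x⟩

lemma mem_sop {A B : Set H} {x : H} : x ∈ h.sop A B ↔ ∃ a ∈ A, ∃ b ∈ B, x ∈ h.op a b := by
  simp only [sop, Set.mem_iUnion, exists_prop]

lemma swap_sop (A B : Set H) : h.swap.sop A B = h.sop B A := by
  ext x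
  simp only [mem_sop, swap]
  tauto

variable {h}

lemma IsAssoc.exists_mem_op_op_iff (hh : h.IsAssoc) {x y z t : H} :
    (∃ w ∈ h.op x y, t ∈ h.op w z) ↔ ∃ w ∈ h.op y z, t ∈ h.op x w := by
  simpa only [mem_sop, Set.mem_singleton_iff, exists_eq_left] using
    Set.ext_iff.mp (hh x y z) t

lemma IsAssoc.swap (hh : h.IsAssoc) : h.swap.IsAssoc := by
  intro x y z
  ext t
  simp only [mem_sop, Set.mem_singleton_iff, exists_eq_left, Hyperop.swap]
  exact hh.exists_mem_op_op_iff.symm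

theorem sop_setOf_rel_eq (hh : h.IsAssoc) {r : H → H → Prop} [IsTrans H r] {e : H}
    (hstep : ∀ x z, z ∈ h.op x e → r z x)
    (hmeet : ∀ x y, r x y → (h.op x e ∩ h.op y e).Nonempty)
    (hinv : ∀ x z, z ∈ h.op x e → x ∈ h.op z e) (M : Set H) :
    h.sop M {d | r d e} = {x | ∃ m ∈ M, r x m} := by
  ext x
  simp only [mem_sop, Set.mem_ofPred_eq]
  constructor
  · rintro ⟨m, hm, d, hde, hx⟩
    obtain ⟨z, hzd, hze⟩ := hmeet d e hde
    -- `x ∈ m ∘ d ⊆ m ∘ (z ∘ e) = (m ∘ z) ∘ e ⊆ (m ∘ (e ∘ e)) ∘ e = ((m ∘ e) ∘ e) ∘ e`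
    obtain ⟨w, hw, hxw⟩ := hh.exists_mem_op_op_iff.mpr ⟨d, hinv d z hzd, hx⟩
    obtain ⟨u, hu, hwu⟩ := hh.exists_mem_op_op_iff.mpr ⟨z, hze, hw⟩
    exact ⟨m, hm, _root_.trans (hstep w x hxw) (_root_.trans (hstep u w hwu) (hstep m u hu))⟩
  · rintro ⟨m, hm, hxm⟩
    obtain ⟨z, hzx, hzm⟩ := hmeet x m hxm
    -- `x ∈ z ∘ e ⊆ (m ∘ e) ∘ e = m ∘ (e ∘ e)`, and `e ∘ e ⊆ {d | r d e}`
    obtain ⟨d, hd, hxd⟩ := hh.exists_mem_op_op_iff.mp ⟨z, hzm, hinv x z hzx⟩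
    exact ⟨m, hm, d, hstep e d hd, hxd⟩

end Hyperop

namespace Hyperring

variable {R : Type*} (S : Hyperring R) {e : R}

lemma lam_of_insertBlock_singleton {x z : R} {l : List R} (hl : InsertBlock e [x] l)
    (hz : z ∈ S.SOP [l]) : S.lam e z x :=
  Or.inl ⟨1, le_rfl, [[x]], [l], rfl, ⟨by simp, by simp⟩, .cons hl .nil,
    Or.inr ⟨hz, by simp [SOP, Hyperop.setFold, Hyperop.listProd, Hyperop.foldl]⟩⟩

lemma lam_of_mem_mul_right {x z : R} (hz : z ∈ S.mul.op x e) : S.lam e z x :=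
  S.lam_of_insertBlock_singleton (l := [x, e]) (Or.inr ⟨[x], [], 1, le_rfl, by simp, by simp⟩)
    (by simpa [SOP, Hyperop.setFold, Hyperop.listProd, Hyperop.foldl] using hz)

lemma lam_of_mem_mul_left {x z : R} (hz : z ∈ S.mul.op e x) : S.lam e z x :=
  S.lam_of_insertBlock_singleton (l := [e, x]) (Or.inr ⟨[], [x], 1, le_rfl, by simp, by simp⟩)
    (by simpa [SOP, Hyperop.setFold, Hyperop.listProd, Hyperop.foldl] using hz)

end Hyperring

theorem stmt16_general {R : Type*} (S : Hyperring R) (e : R) (hstrong : S.LamStrong e)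
    (M : Set R) :
    S.mul.sop M {d | Relation.TransGen (S.lam e) d e} =
      {x | ∃ m ∈ M, Relation.TransGen (S.lam e) x m} ∧
    S.mul.sop {d | Relation.TransGen (S.lam e) d e} M =
      {x | ∃ m ∈ M, Relation.TransGen (S.lam e) x m} := by
  obtain ⟨hmeet, hinv_right, hinv_left⟩ := hstrong
  refine ⟨S.mul.sop_setOf_rel_eq S.mul_assoc
    (fun _ _ hz => .single (S.lam_of_mem_mul_right hz)) (fun x y hxy => (hmeet x y hxy).1)
    hinv_right M, ?_⟩
  rw [← S.mul.swap_sop]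
  exact S.mul.swap.sop_setOf_rel_eq S.mul_assoc.swap
    (fun _ _ hz => .single (S.lam_of_mem_mul_left hz)) (fun x y hxy => (hmeet x y hxy).2)
    hinv_left M

/-- in a `λₑ`-strong hyperring, `M·Dₑ(R) = Dₑ(R)·M = φₑ⁻¹(φₑ(M))`
for every nonempty `M`, where `Dₑ(R) = φₑ⁻¹(1)` is the `λₑ*`-class of `e`. -/
theorem stmt16 {R : Type*} (S : Hyperring R) (e : R) (hstrong : S.LamStrong e)
    (M : Set R) (hM : M.Nonempty) :
    S.mul.sop M {d | Relation.TransGen (S.lam e) d e} =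
      {x | ∃ m ∈ M, Relation.TransGen (S.lam e) x m} ∧
    S.mul.sop {d | Relation.TransGen (S.lam e) d e} M =
      {x | ∃ m ∈ M, Relation.TransGen (S.lam e) x m} :=
  stmt16_general S e hstrong M
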